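/- arXiv:1910.13252 — 4 statements merged into one kernel-verified Lean document; each statement's English description precedes it below -/
import Mathlib

section
/- Let A be an n×n integer matrix of rank k. Let Z = {Λ ∈ ℝⁿ : ΛA ∈ ℤⁿ} (row vector convention) and L = ℤⁿ. Then the quotient group Z/L is isomorphic to the direct product of a finite group and (ℝ/ℤ)^{n−k}. -/
/-- The subgroup of vectors with all coordinates integers. -/
def intLat (ι : Type*) : AddSubgroup (ι → ℝ) where
  carrier := {v | ∀ j, ∃ m : ℤ, v j = m}
  zero_mem' := fun j => ⟨0, by simp⟩
  add_mem' := by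
    rintro x y hx hy j
    obtain ⟨a, ha⟩ := hx j; obtain ⟨b, hb⟩ := hy j
    exact ⟨a + b, by push_cast; rw [Pi.add_apply, ha, hb]⟩
  neg_mem' := by
    rintro x hx j
    obtain ⟨a, ha⟩ := hx j
    exact ⟨-a, by push_cast; rw [Pi.neg_apply, ha]⟩

namespace Stmt2Aux

variable {n : ℕ}

/-- Real pairing of a real row vector with an integer vector. -/
noncomputable def pair (Λ : Fin n → ℝ) (v : Fin n → ℤ) : ℝ := ∑ t, Λ t * (v t : ℝ)

lemma pair_add_right (Λ : Fin n → ℝ) (v w : Fin n → ℤ) :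
    pair Λ (v + w) = pair Λ v + pair Λ w := by
  simp only [pair, Pi.add_apply, Int.cast_add, mul_add, Finset.sum_add_distrib]

lemma pair_smul_right (Λ : Fin n → ℝ) (z : ℤ) (v : Fin n → ℤ) :
    pair Λ (z • v) = (z : ℝ) * pair Λ v := by
  simp only [pair, Pi.smul_apply, smul_eq_mul, Int.cast_mul, Finset.mul_sum]
  exact Finset.sum_congr rfl fun t _ => by ring

lemma pair_add_left (Λ Λ' : Fin n → ℝ) (v : Fin n → ℤ) :
    pair (Λ + Λ') v = pair Λ v + pair Λ' v := by
  simp only [pair, Pi.add_apply, add_mul, Finset.sum_add_distrib]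

/-- The submodule of integer vectors pairing integrally with `Λ`. -/
noncomputable def pairSub (Λ : Fin n → ℝ) : Submodule ℤ (Fin n → ℤ) where
  carrier := {v | ∃ q : ℤ, pair Λ v = q}
  zero_mem' := ⟨0, by simp [pair]⟩
  add_mem' := by
    rintro v w ⟨q, hq⟩ ⟨r, hr⟩
    exact ⟨q + r, by rw [pair_add_right, hq, hr]; push_cast; ring⟩
  smul_mem' := by
    rintro z v ⟨q, hq⟩
    exact ⟨z * q, by rw [pair_smul_right, hq]; push_cast; ring⟩

lemma mem_pairSub {Λ : Fin n → ℝ} {v : Fin n → ℤ} :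
    v ∈ pairSub Λ ↔ ∃ q : ℤ, pair Λ v = q := Iff.rfl

lemma vecMul_cast_eq_pair (A : Matrix (Fin n) (Fin n) ℤ) (Λ : Fin n → ℝ) (j : Fin n) :
    Matrix.vecMul Λ (A.map (Int.cast : ℤ → ℝ)) j = pair Λ (fun i => A i j) := by
  simp [Matrix.vecMul, dotProduct, pair, Matrix.map_apply]

lemma colIn (A : Matrix (Fin n) (Fin n) ℤ) (j : Fin n) :
    (fun i => A i j) ∈ LinearMap.range (Matrix.mulVecLin A) := by
  refine ⟨Pi.single j 1, ?_⟩
  funext i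
  simp [Matrix.mulVecLin, Matrix.mulVec, dotProduct, Pi.single_apply]

lemma memZ_iff_le (A : Matrix (Fin n) (Fin n) ℤ) (Λ : Fin n → ℝ) :
    (∀ j, ∃ q : ℤ, Matrix.vecMul Λ (A.map (Int.cast : ℤ → ℝ)) j = q) ↔
      LinearMap.range (Matrix.mulVecLin A) ≤ pairSub Λ := by
  constructor
  · intro h
    rw [Matrix.range_mulVecLin, Submodule.span_le]
    rintro _ ⟨j, rfl⟩
    obtain ⟨q, hq⟩ := h j
    refine ⟨q, ?_⟩
    have ht : A.col j = fun i => A i j := rfl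
    rw [ht, ← vecMul_cast_eq_pair A Λ j]
    exact hq
  · intro h j
    obtain ⟨q, hq⟩ := h (colIn A j)
    exact ⟨q, by rw [vecMul_cast_eq_pair A Λ j]; exact hq⟩

lemma NSpan (A : Matrix (Fin n) (Fin n) ℤ) {m : ℕ}
    (snf : Module.Basis.SmithNormalForm (LinearMap.range (Matrix.mulVecLin A)) (Fin n) m) :
    LinearMap.range (Matrix.mulVecLin A) =
      Submodule.span ℤ (Set.range fun i => ((snf.bN i : Fin n → ℤ))) := by
  conv_lhs => rw [← Submodule.range_subtype (LinearMap.range (Matrix.mulVecLin A)),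
    ← Submodule.map_top, ← snf.bN.span_eq, Submodule.map_span, ← Set.range_comp]
  rfl

lemma intLat_vecMul (C : Matrix (Fin n) (Fin n) ℤ) (v : Fin n → ℝ)
    (hv : v ∈ intLat (Fin n)) :
    Matrix.vecMul v (C.map (Int.cast : ℤ → ℝ)) ∈ intLat (Fin n) := by
  intro j
  choose w hw using hv
  refine ⟨∑ t, w t * C t j, ?_⟩
  simp only [Matrix.vecMul, dotProduct, Matrix.map_apply]
  push_cast
  exact Finset.sum_congr rfl fun t _ => by rw [hw]

lemma rank_helper (m : ℕ) (A : Matrix (Fin n) (Fin n) ℤ)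
    (snf : Module.Basis.SmithNormalForm (LinearMap.range (Matrix.mulVecLin A)) (Fin n) m) :
    (A.map (Int.cast : ℤ → ℚ)).rank = m := by
  classical
  let cQ : (Fin n → ℤ) →ₗ[ℤ] (Fin n → ℚ) :=
    { toFun := fun v t => (v t : ℚ)
      map_add' := fun v w => funext fun t => by push_cast [Pi.add_apply]; ring
      map_smul' := fun z v => funext fun t => by
        simp only [Pi.smul_apply, smul_eq_mul, RingHom.id_apply, zsmul_eq_mul]
        push_cast
        ring }
  have hcQinj : Function.Injective cQ := fun v w h => funext fun t => by
    have h' : ((v t : ℚ)) = ((w t : ℚ)) := congrFun h t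
    exact_mod_cast h'
  set w : Fin m → (Fin n → ℚ) := fun i => cQ ((snf.bN i : Fin n → ℤ)) with hw
  have h1 : LinearIndependent ℤ (fun i => ((snf.bN i : Fin n → ℤ))) :=
    snf.bN.linearIndependent.map' (LinearMap.range (Matrix.mulVecLin A)).subtype
      (Submodule.ker_subtype _)
  have h2 : LinearIndependent ℤ w := h1.map' cQ (LinearMap.ker_eq_bot.mpr hcQinj)
  have h3 : LinearIndependent ℚ w := (LinearIndependent.iff_fractionRing ℤ ℚ).mp h2
  have hmemspan : ∀ v ∈ LinearMap.range (Matrix.mulVecLin A),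
      cQ v ∈ Submodule.span ℚ (Set.range w) := by
    intro v hv
    rw [NSpan A snf] at hv
    refine Submodule.span_induction (p := fun x _ => cQ x ∈ Submodule.span ℚ (Set.range w))
      ?_ ?_ ?_ ?_ hv
    · rintro _ ⟨i, rfl⟩
      exact Submodule.subset_span ⟨i, rfl⟩
    · simp only [map_zero]; exact Submodule.zero_mem _
    · intro x y _ _ hx hy; rw [map_add]; exact Submodule.add_mem _ hx hy
    · intro z x _ hx
      rw [map_smul, ← Int.cast_smul_eq_zsmul ℚ]
      exact Submodule.smul_mem _ _ hx
  have hspan : Submodule.span ℚ (Set.range w) =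
      LinearMap.range (Matrix.mulVecLin (A.map (Int.cast : ℤ → ℚ))) := by
    apply le_antisymm
    · rw [Submodule.span_le]
      rintro _ ⟨i, rfl⟩
      obtain ⟨cvec, hc⟩ := (snf.bN i).2
      refine ⟨fun j => (cvec j : ℚ), ?_⟩
      funext t
      have := congrFun hc t
      simp only [Matrix.mulVecLin_apply, Matrix.mulVec, dotProduct,
        Matrix.map_apply] at this ⊢
      rw [hw]
      show (∑ j, ((A t j : ℚ)) * (cvec j : ℚ)) = ((snf.bN i : Fin n → ℤ) t : ℚ)
      rw [← this]
      push_cast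
      ring
    · rw [Matrix.range_mulVecLin, Submodule.span_le]
      rintro _ ⟨j, rfl⟩
      have hcol : (A.map (Int.cast : ℤ → ℚ)).col j = cQ (fun i => A i j) := by
        funext t; rfl
      rw [hcol]
      exact hmemspan _ (colIn A j)
  rw [Matrix.rank, ← hspan, finrank_span_eq_card h3, Fintype.card_fin]

end Stmt2Aux

open Stmt2Aux in
theorem helper (n k m : ℕ) (A : Matrix (Fin n) (Fin n) ℤ)
    (Z : AddSubgroup (Fin n → ℝ))
    (hZ : Z = AddSubgroup.comap ((A.map (Int.cast : ℤ → ℝ)).vecMulLinear).toAddMonoidHom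
      (intLat (Fin n)))
    (snf : Module.Basis.SmithNormalForm (LinearMap.range (Matrix.mulVecLin A)) (Fin n) m)
    (hmk : m = k) :
    ∃ (G : Type) (_ : AddCommGroup G) (_ : Finite G),
      Nonempty ((↥Z ⧸ (intLat (Fin n)).addSubgroupOf Z) ≃+
        (G × (Fin (n - k) → AddCircle (1 : ℝ)))) := by
  classical
  subst hmk
  -- matrices of the basis change
  set P : Matrix (Fin n) (Fin n) ℤ := (Pi.basisFun ℤ (Fin n)).toMatrix ⇑snf.bM with hP
  set Q : Matrix (Fin n) (Fin n) ℤ := snf.bM.toMatrix ⇑(Pi.basisFun ℤ (Fin n)) with hQ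
  have hPQ : P * Q = 1 := Module.Basis.toMatrix_mul_toMatrix_flip _ _
  have hQP : Q * P = 1 := Module.Basis.toMatrix_mul_toMatrix_flip _ _
  set Pr : Matrix (Fin n) (Fin n) ℝ := P.map (Int.cast : ℤ → ℝ) with hPr
  set Qr : Matrix (Fin n) (Fin n) ℝ := Q.map (Int.cast : ℤ → ℝ) with hQr
  have hmapmul : ∀ C D : Matrix (Fin n) (Fin n) ℤ,
      (C * D).map (Int.cast : ℤ → ℝ) = C.map (Int.cast : ℤ → ℝ) * D.map (Int.cast : ℤ → ℝ) :=
    fun C D => Matrix.map_mul (f := Int.castRingHom ℝ)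
  have hone : ((1 : Matrix (Fin n) (Fin n) ℤ)).map (Int.cast : ℤ → ℝ) = 1 :=
    Matrix.map_one _ Int.cast_zero Int.cast_one
  have hPQr : Pr * Qr = 1 := by rw [hPr, hQr, ← hmapmul, hPQ, hone]
  have hQPr : Qr * Pr = 1 := by rw [hPr, hQr, ← hmapmul, hQP, hone]
  have hinv1 : ∀ x : Fin n → ℝ, Matrix.vecMul (Matrix.vecMul x Pr) Qr = x := fun x => by
    rw [Matrix.vecMul_vecMul, hPQr, Matrix.vecMul_one]
  have hinv2 : ∀ x : Fin n → ℝ, Matrix.vecMul (Matrix.vecMul x Qr) Pr = x := fun x => by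
    rw [Matrix.vecMul_vecMul, hQPr, Matrix.vecMul_one]
  have hPapp : ∀ (Λ : Fin n → ℝ) (j : Fin n),
      Matrix.vecMul Λ Pr j = ∑ t, Λ t * ((snf.bM j) t : ℝ) := by
    intro Λ j
    simp [hPr, hP, Matrix.vecMul, dotProduct, Matrix.map_apply,
      Module.Basis.toMatrix_apply, Pi.basisFun_repr]
  have hpair_snf : ∀ (Λ : Fin n → ℝ) (i : Fin m),
      pair Λ ((snf.bN i : Fin n → ℤ)) = (snf.a i : ℝ) * Matrix.vecMul Λ Pr (snf.f i) := by
    intro Λ i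
    rw [hPapp, snf.snf i, pair_smul_right]
    simp [pair]
  have hmemZ : ∀ Λ : Fin n → ℝ,
      Λ ∈ Z ↔ ∀ i : Fin m, ∃ q : ℤ, pair Λ ((snf.bN i : Fin n → ℤ)) = q := by
    intro Λ
    rw [hZ]
    have : Λ ∈ AddSubgroup.comap ((A.map (Int.cast : ℤ → ℝ)).vecMulLinear).toAddMonoidHom
        (intLat (Fin n)) ↔
        ∀ j, ∃ q : ℤ, Matrix.vecMul Λ (A.map (Int.cast : ℤ → ℝ)) j = q := by
      simp only [AddSubgroup.mem_comap, LinearMap.toAddMonoidHom_coe,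
        Matrix.vecMulLinear_apply]
      rfl
    rw [this, memZ_iff_le]
    constructor
    · intro h i; exact h (snf.bN i).2
    · intro h
      rw [NSpan A snf, Submodule.span_le]
      rintro _ ⟨i, rfl⟩
      exact h i
  -- nonzero diagonal entries
  have ha : ∀ i, snf.a i ≠ 0 := by
    intro i h
    have hsnf := snf.snf i
    rw [h, zero_smul] at hsnf
    exact snf.bN.ne_zero i (Subtype.ext hsnf)
  haveI hNZ : ∀ i, NeZero ((snf.a i).natAbs) := fun i => ⟨Int.natAbs_ne_zero.mpr (ha i)⟩
  -- the index equivalence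
  have hcard : Fintype.card {j : Fin n // j ∉ Set.range ⇑snf.f} = n - m := by
    have h1 : Fintype.card {j : Fin n // j ∈ Set.range ⇑snf.f} = m := by
      rw [Set.card_range_of_injective snf.f.injective, Fintype.card_fin]
    rw [Fintype.card_subtype_compl, Fintype.card_fin, h1]
  have e2 : {j : Fin n // j ∉ Set.range ⇑snf.f} ≃ Fin (n - m) :=
    Fintype.equivFinOfCardEq hcard
  -- the integer invariants
  have hqex : ∀ (Λ : ↥Z) (i : Fin m), ∃ q : ℤ, pair (↑Λ) ((snf.bN i : Fin n → ℤ)) = q :=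
    fun Λ i => (hmemZ ↑Λ).mp Λ.2 i
  set qf : ↥Z → Fin m → ℤ := fun Λ i => (hqex Λ i).choose with hqfdef
  have hqf : ∀ (Λ : ↥Z) (i : Fin m), ((qf Λ i : ℤ) : ℝ) = pair (↑Λ) ((snf.bN i : Fin n → ℤ)) :=
    fun Λ i => ((hqex Λ i).choose_spec).symm
  have hqf_add : ∀ (Λ Λ' : ↥Z) (i : Fin m), qf (Λ + Λ') i = qf Λ i + qf Λ' i := by
    intro Λ Λ' i
    have h : ((qf (Λ + Λ') i : ℤ) : ℝ) = ((qf Λ i + qf Λ' i : ℤ) : ℝ) := by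
      rw [hqf]
      push_cast
      rw [hqf, hqf]
      exact pair_add_left _ _ _
    exact_mod_cast h
  set tor : ↥Z → (Fin (n - m) → AddCircle (1 : ℝ)) :=
    fun Λ t => ((Matrix.vecMul (↑Λ) Pr ((e2.symm t : Fin n)) : ℝ) : AddCircle (1 : ℝ))
    with htordef
  set ψ : ↥Z →+ ((i : Fin m) → ZMod ((snf.a i).natAbs)) × (Fin (n - m) → AddCircle (1 : ℝ)) :=
    AddMonoidHom.mk' (fun Λ =>
      (fun i => ((qf Λ i : ℤ) : ZMod ((snf.a i).natAbs)), tor Λ))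
      (by
        intro Λ Λ'
        refine Prod.ext ?_ ?_
        · funext i
          show ((qf (Λ + Λ') i : ℤ) : ZMod ((snf.a i).natAbs)) = _
          rw [hqf_add]
          push_cast
          rfl
        · funext t
          show tor (Λ + Λ') t = tor Λ t + tor Λ' t
          simp only [htordef, AddSubgroup.coe_add, Matrix.add_vecMul, Pi.add_apply]
          rfl) with hψdef
  have hψapp : ∀ Λ : ↥Z, ψ Λ =
      (fun i => ((qf Λ i : ℤ) : ZMod ((snf.a i).natAbs)), tor Λ) := fun Λ => rfl
  -- surjectivity
  have hsurj : Function.Surjective ψ := by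
    rintro ⟨g, c⟩
    choose zfun hzfun using fun i => ZMod.intCast_surjective (g i)
    choose rfun hrfun using fun t => QuotientAddGroup.mk_surjective (c t)
    set x : Fin n → ℝ := fun j =>
      if h : ∃ i, snf.f i = j then (zfun h.choose : ℝ) / ((snf.a h.choose : ℤ) : ℝ)
      else rfun (e2 ⟨j, h⟩) with hx
    have hxf : ∀ i : Fin m, x (snf.f i) = (zfun i : ℝ) / (snf.a i : ℝ) := by
      intro i
      have hex : ∃ i', snf.f i' = snf.f i := ⟨i, rfl⟩
      rw [hx]
      simp only [dif_pos hex]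
      have : hex.choose = i := snf.f.injective hex.choose_spec
      rw [this]
    have hax : ∀ i, (snf.a i : ℝ) * x (snf.f i) = (zfun i : ℝ) := by
      intro i
      rw [hxf, mul_comm]
      exact div_mul_cancel₀ _ ((Int.cast_ne_zero (α := ℝ)).mpr (ha i))
    set Λ0 : Fin n → ℝ := Matrix.vecMul x Qr with hΛ0
    have hΛ0P : Matrix.vecMul Λ0 Pr = x := hinv2 x
    have hΛ0Z : Λ0 ∈ Z := (hmemZ Λ0).mpr fun i =>
      ⟨zfun i, by rw [hpair_snf, hΛ0P, hax]⟩
    refine ⟨⟨Λ0, hΛ0Z⟩, ?_⟩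
    rw [hψapp]
    refine Prod.ext ?_ ?_
    · funext i
      show ((qf ⟨Λ0, hΛ0Z⟩ i : ℤ) : ZMod ((snf.a i).natAbs)) = g i
      have hq : qf ⟨Λ0, hΛ0Z⟩ i = zfun i := by
        have h1 := hqf ⟨Λ0, hΛ0Z⟩ i
        rw [hpair_snf] at h1
        simp only at h1
        rw [hΛ0P, hax] at h1
        exact_mod_cast h1
      rw [hq, hzfun]
    · funext t
      show tor ⟨Λ0, hΛ0Z⟩ t = c t
      rw [htordef]
      simp only
      rw [hΛ0P]
      have hne : ¬∃ i, snf.f i = ((e2.symm t : Fin n)) := (e2.symm t).2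
      rw [hx]
      simp only [dif_neg hne]
      show ((rfun (e2 (e2.symm t)) : ℝ) : AddCircle (1 : ℝ)) = c t
      rw [e2.apply_symm_apply]
      exact hrfun t
  -- kernel computation
  have hker : ψ.ker = (intLat (Fin n)).addSubgroupOf Z := by
    ext Λ
    rw [AddMonoidHom.mem_ker, AddSubgroup.mem_addSubgroupOf]
    constructor
    · intro h
      have h1 : ∀ i, ((qf Λ i : ℤ) : ZMod ((snf.a i).natAbs)) = 0 := by
        intro i
        have := congrArg Prod.fst h
        exact congrFun this i
      have h2 : ∀ t, tor Λ t = 0 := by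
        intro t
        have := congrArg Prod.snd h
        exact congrFun this t
      have hy : Matrix.vecMul (↑Λ) Pr ∈ intLat (Fin n) := by
        intro j
        by_cases hj : ∃ i, snf.f i = j
        · obtain ⟨i, rfl⟩ := hj
          have hdvd : ((snf.a i).natAbs : ℤ) ∣ qf Λ i :=
            (ZMod.intCast_zmod_eq_zero_iff_dvd _ _).mp (h1 i)
          obtain ⟨t, ht⟩ := Int.natAbs_dvd.mp hdvd
          refine ⟨t, ?_⟩
          have hh := hqf Λ i
          rw [hpair_snf, ht] at hh
          push_cast at hh
          exact mul_left_cancel₀ (Int.cast_ne_zero.mpr (ha i)) hh.symm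
        · have hj' : j ∉ Set.range ⇑snf.f := hj
          have := h2 (e2 ⟨j, hj'⟩)
          rw [htordef] at this
          simp only [e2.symm_apply_apply] at this
          obtain ⟨z, hz⟩ := (AddCircle.coe_eq_zero_iff 1).mp this
          exact ⟨z, by rw [← hz]; simp⟩
      have hΛeq : (↑Λ : Fin n → ℝ) = Matrix.vecMul (Matrix.vecMul (↑Λ) Pr) Qr :=
        (hinv1 _).symm
      rw [hΛeq]
      exact intLat_vecMul Q _ hy
    · intro hΛ
      have hy := intLat_vecMul P _ hΛ
      choose w hw using hy
      simp only [← hPr] at hw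
      rw [hψapp]
      have hzero : ((0 : ((i : Fin m) → ZMod ((snf.a i).natAbs)) ×
          (Fin (n - m) → AddCircle (1 : ℝ)))) = (0, 0) := rfl
      rw [hzero]
      refine Prod.ext ?_ ?_
      · funext i
        show ((qf Λ i : ℤ) : ZMod ((snf.a i).natAbs)) = 0
        have hq : qf Λ i = snf.a i * w (snf.f i) := by
          have h1 := hqf Λ i
          rw [hpair_snf, hw] at h1
          exact_mod_cast h1
        rw [hq, ZMod.intCast_zmod_eq_zero_iff_dvd]
        exact Int.natAbs_dvd.mpr (dvd_mul_right _ _)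
      · funext t
        show tor Λ t = 0
        rw [htordef]
        simp only
        rw [AddCircle.coe_eq_zero_iff]
        refine ⟨w ((e2.symm t : Fin n)), ?_⟩
        rw [hw]
        simp
  refine ⟨(i : Fin m) → ZMod ((snf.a i).natAbs), inferInstance, inferInstance, ⟨?_⟩⟩
  exact (QuotientAddGroup.quotientAddEquivOfEq hker.symm).trans
    (QuotientAddGroup.quotientKerEquivOfSurjective ψ hsurj)

/-- Let `A` be an `n × n` integer matrix of rank `k`,
`Z = {Λ ∈ ℝⁿ : Λ A ∈ ℤⁿ}` (row vector convention) and `L = ℤⁿ`. Then `Z/L` is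
isomorphic to the product of a finite group and `(ℝ/ℤ)^(n-k)`. -/
theorem stmt2 (n k : ℕ) (A : Matrix (Fin n) (Fin n) ℤ)
    (hrank : (A.map (Int.cast : ℤ → ℚ)).rank = k)
    (Z : AddSubgroup (Fin n → ℝ))
    (hZ : Z = AddSubgroup.comap ((A.map (Int.cast : ℤ → ℝ)).vecMulLinear).toAddMonoidHom
      (intLat (Fin n))) :
    ∃ (G : Type) (_ : AddCommGroup G) (_ : Finite G),
      Nonempty ((↥Z ⧸ (intLat (Fin n)).addSubgroupOf Z) ≃+
        (G × (Fin (n - k) → AddCircle (1 : ℝ)))) := by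
  classical
  obtain ⟨m, snf⟩ := Submodule.smithNormalForm (Pi.basisFun ℤ (Fin n))
    (LinearMap.range (Matrix.mulVecLin A))
  have hm : m = k := by rw [← hrank, Stmt2Aux.rank_helper m A snf]
  exact helper n k m A Z hZ snf hm
end

section
/- Let A = (a_{ij}) be a 2×2 Cartan matrix (a₁₁ = a₂₂ = 2, a₁₂, a₂₁ ≤ 0, a₁₂ = 0 iff a₂₁ = 0) with Δ = 4 − a₁₂a₂₁ ≠ 0. If a₁₂ is odd or a₂₁ is odd, then the quotient group {Λ ∈ ℝ² : ΛA ∈ ℤ²}/ℤ² is cyclic of order |Δ|. -/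
/-- A (generalized) Cartan matrix: 2's on the diagonal, non-positive off-diagonal entries,
and `a_ij = 0 ↔ a_ji = 0`. -/
def IsCartanMatrix {n : ℕ} (A : Matrix (Fin n) (Fin n) ℤ) : Prop :=
  (∀ i, A i i = 2) ∧ (∀ i j, i ≠ j → A i j ≤ 0) ∧ (∀ i j, A i j = 0 ↔ A j i = 0)

lemma stmt4_coprime (b c : ℤ) (hb : Odd b) : IsCoprime b (4 - b * c) := by
  obtain ⟨t, ht⟩ := hb
  have h4 : IsCoprime b 4 := ⟨b, -(t^2+t), by subst ht; ring⟩
  have h := h4.add_mul_left_right (-c)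
  simpa [sub_eq_add_neg, mul_neg] using h

lemma stmt4_key (b c m n : ℤ) (hb : Odd b) (h : (4 - b*c) ∣ (b*m - 2*n)) :
    (4 - b*c) ∣ (2*m - c*n) ∧ (4 - b*c) ∣ (2*n - b*m) := by
  constructor
  · have h2 : (4 - b*c) ∣ b * (2*m - c*n) := by
      have e : b * (2*m - c*n) = 2*(b*m - 2*n) + (4 - b*c)*n := by ring
      rw [e]; exact dvd_add (h.mul_left 2) (dvd_mul_right _ _)
    exact (stmt4_coprime b c hb).symm.dvd_of_dvd_mul_left h2
  · have := h.neg_right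
    simpa [neg_sub] using this

/-- For a 2×2 Cartan matrix with `Δ = 4 - a₁₂ a₂₁ ≠ 0` and `a₁₂` or `a₂₁` odd,
the group `{Λ ∈ ℝ² : ΛA ∈ ℤ²}/ℤ²` is cyclic of order `|Δ|`. -/
theorem stmt4 (A : Matrix (Fin 2) (Fin 2) ℤ) (hA : IsCartanMatrix A)
    (hΔ : 4 - A 0 1 * A 1 0 ≠ 0) (hodd : Odd (A 0 1) ∨ Odd (A 1 0))
    (Z : AddSubgroup (Fin 2 → ℝ))
    (hZ : Z = AddSubgroup.comap ((A.map (Int.cast : ℤ → ℝ)).vecMulLinear).toAddMonoidHom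
      (intLat (Fin 2))) :
    IsAddCyclic (↥Z ⧸ (intLat (Fin 2)).addSubgroupOf Z) ∧
      Nat.card (↥Z ⧸ (intLat (Fin 2)).addSubgroupOf Z) = (4 - A 0 1 * A 1 0).natAbs := by
  obtain ⟨hdiag, -, -⟩ := hA
  set b := A 0 1 with hb
  set c := A 1 0 with hc
  set Δ : ℤ := 4 - b * c with hΔdef
  set D : ℕ := Δ.natAbs with hD
  have hΔr : ((Δ : ℤ) : ℝ) ≠ 0 := Int.cast_ne_zero.mpr hΔ
  -- membership characterization
  have hmem : ∀ Λ : Fin 2 → ℝ, Λ ∈ Z ↔ ((∃ m : ℤ, Λ 0 * 2 + Λ 1 * (c : ℝ) = m) ∧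
      (∃ n : ℤ, Λ 0 * (b : ℝ) + Λ 1 * 2 = n)) := by
    intro Λ
    rw [hZ]
    simp only [AddSubgroup.mem_comap, LinearMap.toAddMonoidHom_coe, Matrix.vecMulLinear_apply]
    show (∀ j, ∃ m : ℤ, Matrix.vecMul Λ (A.map _) j = (m:ℝ)) ↔ _
    rw [Fin.forall_fin_two]
    simp [Matrix.vecMul, dotProduct, Fin.sum_univ_two, Matrix.map_apply, hdiag 0, hdiag 1,
      ← hb, ← hc]
  -- intLat membership characterization
  have hintmem : ∀ Λ : Fin 2 → ℝ, Λ ∈ intLat (Fin 2) ↔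
      ((∃ p : ℤ, Λ 0 = p) ∧ (∃ q : ℤ, Λ 1 = q)) := by
    intro Λ
    show (∀ j, ∃ m : ℤ, Λ j = m) ↔ _
    rw [Fin.forall_fin_two]
  -- parametric data
  obtain ⟨α, β, hP1, hP2, hP3, u, v, hP4⟩ :
      ∃ α β : ℤ, Δ ∣ (2*α + b*β) ∧ Δ ∣ (c*α + 2*β) ∧
        (∀ m n : ℤ, Δ ∣ (α*m + β*n) → Δ ∣ (2*m - c*n) ∧ Δ ∣ (2*n - b*m)) ∧
        ∃ u v : ℤ, α*u + β*v = 1 := by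
    rcases hodd with ho | ho
    · obtain ⟨t, ht⟩ := ho
      refine ⟨b, -2, ⟨0, by ring⟩, ⟨-1, by ring⟩, ?_, 1, t, by rw [ht]; ring⟩
      intro m n hdvd
      have : Δ ∣ (b*m - 2*n) := by
        have e : b*m - 2*n = b*m + (-2)*n := by ring
        rw [e]; exact hdvd
      exact stmt4_key b c m n ⟨t, ht⟩ this
    · obtain ⟨t, ht⟩ := ho
      refine ⟨-2, c, ⟨-1, by ring⟩, ⟨0, by ring⟩, ?_, t, 1, by rw [ht]; ring⟩
      intro m n hdvd
      have hdvd' : (4 - c*b) ∣ (c*n - 2*m) := by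
        have e1 : (4 - c*b) = Δ := by rw [hΔdef]; ring
        have e2 : c*n - 2*m = (-2)*m + c*n := by ring
        rw [e1, e2]; exact hdvd
      obtain ⟨d1, d2⟩ := stmt4_key c b n m ⟨t, ht⟩ hdvd'
      have e1 : Δ = 4 - c*b := by rw [hΔdef]; ring
      rw [e1]
      exact ⟨d2, d1⟩
  -- the homomorphism data
  have hfl : ∀ (x : ℝ) (m : ℤ), x = m → ⌊x⌋ = m := fun x m h => by rw [h, Int.floor_intCast]
  set g : ↥Z → ℤ := fun Λ =>
    α * ⌊(Λ : Fin 2 → ℝ) 0 * 2 + (Λ : Fin 2 → ℝ) 1 * (c : ℝ)⌋ +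
    β * ⌊(Λ : Fin 2 → ℝ) 0 * (b : ℝ) + (Λ : Fin 2 → ℝ) 1 * 2⌋ with hgdef
  -- value of g from witnesses
  have hgval : ∀ (Λ : ↥Z) (m n : ℤ), (Λ : Fin 2 → ℝ) 0 * 2 + (Λ : Fin 2 → ℝ) 1 * (c : ℝ) = m →
      (Λ : Fin 2 → ℝ) 0 * (b : ℝ) + (Λ : Fin 2 → ℝ) 1 * 2 = n → g Λ = α * m + β * n := by
    intro Λ m n h1 h2
    rw [hgdef]
    simp only
    rw [hfl _ _ h1, hfl _ _ h2]
  have hg_add : ∀ x y : ↥Z, g (x + y) = g x + g y := by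
    intro x y
    obtain ⟨⟨mx, hmx⟩, ⟨nx, hnx⟩⟩ := (hmem x).mp x.2
    obtain ⟨⟨my, hmy⟩, ⟨ny, hny⟩⟩ := (hmem y).mp y.2
    have hxy1 : ((x + y : ↥Z) : Fin 2 → ℝ) 0 * 2 + ((x + y : ↥Z) : Fin 2 → ℝ) 1 * (c:ℝ)
        = ((mx + my : ℤ) : ℝ) := by
      push_cast
      simp only [AddSubgroup.coe_add, Pi.add_apply]
      rw [← hmx, ← hmy]; ring
    have hxy2 : ((x + y : ↥Z) : Fin 2 → ℝ) 0 * (b:ℝ) + ((x + y : ↥Z) : Fin 2 → ℝ) 1 * 2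
        = ((nx + ny : ℤ) : ℝ) := by
      push_cast
      simp only [AddSubgroup.coe_add, Pi.add_apply]
      rw [← hnx, ← hny]; ring
    rw [hgval _ _ _ hmx hnx, hgval _ _ _ hmy hny, hgval _ _ _ hxy1 hxy2]
    ring
  set φ : ↥Z →+ ZMod D := AddMonoidHom.mk' (fun x => ((g x : ℤ) : ZMod D))
    (by intro x y
        show ((g (x + y) : ℤ) : ZMod D) = ((g x : ℤ) : ZMod D) + ((g y : ℤ) : ZMod D)
        rw [hg_add]; push_cast; ring) with hφdef
  have hφval : ∀ x : ↥Z, φ x = ((g x : ℤ) : ZMod D) := fun x => rfl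
  -- vanishing criterion
  have hvanish : ∀ k : ℤ, ((k : ZMod D) = 0) ↔ Δ ∣ k := by
    intro k
    rw [ZMod.intCast_zmod_eq_zero_iff_dvd, hD, Int.natAbs_dvd]
  -- kernel
  have hker : φ.ker = (intLat (Fin 2)).addSubgroupOf Z := by
    ext Λ
    rw [AddMonoidHom.mem_ker, AddSubgroup.mem_addSubgroupOf, hφval, hvanish]
    obtain ⟨⟨m, hm⟩, ⟨n, hn⟩⟩ := (hmem Λ).mp Λ.2
    rw [hgval Λ m n hm hn, hintmem]
    constructor
    · intro hdvd
      obtain ⟨d1, d2⟩ := hP3 m n hdvd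
      obtain ⟨p, hp⟩ := d1
      obtain ⟨q, hq⟩ := d2
      constructor
      · refine ⟨p, ?_⟩
        have key : (Λ : Fin 2 → ℝ) 0 * (Δ : ℝ) = ((Δ * p : ℤ) : ℝ) := by
          rw [← hp]
          push_cast [hΔdef]
          rw [← hm, ← hn]; ring
        have key2 : (Λ : Fin 2 → ℝ) 0 * (Δ : ℝ) = (p : ℝ) * (Δ : ℝ) := by
          rw [key]; push_cast; ring
        exact mul_right_cancel₀ hΔr key2
      · refine ⟨q, ?_⟩
        have key : (Λ : Fin 2 → ℝ) 1 * (Δ : ℝ) = ((Δ * q : ℤ) : ℝ) := by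
          rw [← hq]
          push_cast [hΔdef]
          rw [← hm, ← hn]; ring
        have key2 : (Λ : Fin 2 → ℝ) 1 * (Δ : ℝ) = (q : ℝ) * (Δ : ℝ) := by
          rw [key]; push_cast; ring
        exact mul_right_cancel₀ hΔr key2
    · rintro ⟨⟨p, hp⟩, ⟨q, hq⟩⟩
      -- m = 2p + cq, n = bp + 2q
      have hm' : (m : ℝ) = ((2*p + c*q : ℤ) : ℝ) := by
        rw [← hm, hp, hq]; push_cast; ring
      have hn' : (n : ℝ) = ((b*p + 2*q : ℤ) : ℝ) := by
        rw [← hn, hp, hq]; push_cast; ring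
      have hm2 : m = 2*p + c*q := by exact_mod_cast hm'
      have hn2 : n = b*p + 2*q := by exact_mod_cast hn'
      obtain ⟨k1, hk1⟩ := hP1
      obtain ⟨k2, hk2⟩ := hP2
      refine ⟨k1 * p + k2 * q, ?_⟩
      rw [hm2, hn2]
      have : α*(2*p + c*q) + β*(b*p + 2*q) = (2*α + b*β)*p + (c*α + 2*β)*q := by ring
      rw [this, hk1, hk2]; ring
  -- surjectivity
  have hsurj : Function.Surjective φ := by
    intro z
    obtain ⟨s, rfl⟩ := ZMod.intCast_surjective z
    set m : ℤ := u * s with hmdef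
    set n : ℤ := v * s with hndef
    set Λ : Fin 2 → ℝ := ![((2*m - c*n : ℤ) : ℝ) / (Δ : ℝ), ((2*n - b*m : ℤ) : ℝ) / (Δ : ℝ)]
      with hΛdef
    have hΛ0 : Λ 0 = ((2*m - c*n : ℤ) : ℝ) / (Δ : ℝ) := rfl
    have hΛ1 : Λ 1 = ((2*n - b*m : ℤ) : ℝ) / (Δ : ℝ) := rfl
    have h1 : Λ 0 * 2 + Λ 1 * (c : ℝ) = (m : ℝ) := by
      rw [hΛ0, hΛ1]
      field_simp
      push_cast [hΔdef]
      ring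
    have h2 : Λ 0 * (b : ℝ) + Λ 1 * 2 = (n : ℝ) := by
      rw [hΛ0, hΛ1]
      field_simp
      push_cast [hΔdef]
      ring
    have hΛZ : Λ ∈ Z := (hmem Λ).mpr ⟨⟨m, h1⟩, ⟨n, h2⟩⟩
    refine ⟨⟨Λ, hΛZ⟩, ?_⟩
    rw [hφval, hgval ⟨Λ, hΛZ⟩ m n h1 h2, hmdef, hndef]
    have : α * (u * s) + β * (v * s) = (α*u + β*v) * s := by ring
    rw [this, hP4, one_mul]
  -- conclude
  have e := (QuotientAddGroup.quotientAddEquivOfEq hker.symm).trans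
    (QuotientAddGroup.quotientKerEquivOfSurjective φ hsurj)
  constructor
  · exact isAddCyclic_of_surjective e.symm e.symm.surjective
  · rw [Nat.card_congr e.toEquiv, Nat.card_zmod]
end

section
/- Let A = (a_{ij}) be a 2×2 Cartan matrix with Δ = 4 − a₁₂a₂₁ ≠ 0 and both a₁₂, a₂₁ even. Then the quotient group {Λ ∈ ℝ² : ΛA ∈ ℤ²}/ℤ² is isomorphic to ℤ/(|Δ|/2) × ℤ/2. -/
/-- For a 2×2 Cartan matrix with `Δ = 4 - a₁₂ a₂₁ ≠ 0` and both `a₁₂, a₂₁` even,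
the group `{Λ ∈ ℝ² : ΛA ∈ ℤ²}/ℤ²` is isomorphic to `ℤ/(|Δ|/2) × ℤ/2`. -/
theorem stmt5 (A : Matrix (Fin 2) (Fin 2) ℤ) (hA : IsCartanMatrix A)
    (hΔ : 4 - A 0 1 * A 1 0 ≠ 0) (he1 : Even (A 0 1)) (he2 : Even (A 1 0))
    (Z : AddSubgroup (Fin 2 → ℝ))
    (hZ : Z = AddSubgroup.comap ((A.map (Int.cast : ℤ → ℝ)).vecMulLinear).toAddMonoidHom
      (intLat (Fin 2))) :
    Nonempty ((↥Z ⧸ (intLat (Fin 2)).addSubgroupOf Z) ≃+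
      (ZMod ((4 - A 0 1 * A 1 0).natAbs / 2) × ZMod 2)) := by
  obtain ⟨hdiag, -, -⟩ := hA
  obtain ⟨b', hb'⟩ := he1
  obtain ⟨c', hc'⟩ := he2
  set M := A.map (Int.cast : ℤ → ℝ) with hM
  set b := A 0 1 with hb
  set c := A 1 0 with hc
  set d : ℤ := 2 - 2 * b' * c' with hd
  have hΔd : 4 - b * c = 2 * d := by rw [hb', hc', hd]; ring
  have hd0 : d ≠ 0 := by intro h; apply hΔ; rw [hΔd, h, mul_zero]
  have hΔR : ((4 - b * c : ℤ) : ℝ) ≠ 0 := by exact_mod_cast hΔ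
  have hΔR' : (4 - (b : ℝ) * (c : ℝ)) ≠ 0 := by push_cast at hΔR; exact hΔR
  have hn : (4 - b * c).natAbs / 2 = d.natAbs := by
    have h2 : (2 : ℤ).natAbs = 2 := rfl
    rw [hΔd, Int.natAbs_mul, h2]; omega
  have hM00 : M 0 0 = 2 := by simp [hM, Matrix.map_apply, hdiag 0]
  have hM11 : M 1 1 = 2 := by simp [hM, Matrix.map_apply, hdiag 1]
  have hM01 : M 0 1 = (b : ℝ) := by simp [hM, Matrix.map_apply, hb]
  have hM10 : M 1 0 = (c : ℝ) := by simp [hM, Matrix.map_apply, hc]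
  have hvm : ∀ (v : Fin 2 → ℝ) (j : Fin 2),
      Matrix.vecMul v M j = v 0 * M 0 j + v 1 * M 1 j := by
    intro v j
    simp [Matrix.vecMul, dotProduct, Fin.sum_univ_two]
  have hmem : ∀ v : Fin 2 → ℝ, v ∈ Z ↔ ∀ j, ∃ m : ℤ, Matrix.vecMul v M j = m := by
    intro v
    rw [hZ]
    simp only [AddSubgroup.mem_comap, LinearMap.toAddMonoidHom_coe,
      Matrix.vecMulLinear_apply]
    rfl
  have hfl : ∀ (Λ : Z) (j : Fin 2),
      ((⌊Matrix.vecMul (Λ : Fin 2 → ℝ) M j⌋ : ℤ) : ℝ) = Matrix.vecMul (Λ : Fin 2 → ℝ) M j := by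
    intro Λ j
    obtain ⟨m, hm⟩ := (hmem Λ).mp Λ.2 j
    rw [hm, Int.floor_intCast]
  set F : Z → ℤ × ℤ := fun Λ =>
    (⌊Matrix.vecMul (Λ : Fin 2 → ℝ) M 1⌋ - b' * ⌊Matrix.vecMul (Λ : Fin 2 → ℝ) M 0⌋,
     ⌊Matrix.vecMul (Λ : Fin 2 → ℝ) M 0⌋) with hF
  have hFadd : ∀ x y : Z, F (x + y) = F x + F y := by
    intro x y
    have h : ∀ j, ⌊Matrix.vecMul ((x + y : Z) : Fin 2 → ℝ) M j⌋ =
        ⌊Matrix.vecMul (x : Fin 2 → ℝ) M j⌋ + ⌊Matrix.vecMul (y : Fin 2 → ℝ) M j⌋ := by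
      intro j
      have heq : Matrix.vecMul ((x + y : Z) : Fin 2 → ℝ) M j =
          Matrix.vecMul (x : Fin 2 → ℝ) M j + Matrix.vecMul (y : Fin 2 → ℝ) M j := by
        rw [AddSubgroup.coe_add, Matrix.add_vecMul]; rfl
      rw [← Int.cast_inj (α := ℝ), Int.cast_add, hfl (x + y) j, hfl x j, hfl y j, heq]
    have h0 := h 0
    have h1 := h 1
    simp only [hF]
    rw [Prod.mk_add_mk, Prod.mk.injEq]
    exact ⟨by rw [h0, h1]; ring, h0⟩
  set Fhom : Z →+ ℤ × ℤ := AddMonoidHom.mk' F hFadd with hFhom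
  set χ : Z →+ ZMod ((4 - b * c).natAbs / 2) × ZMod 2 :=
    ((Int.castAddHom (ZMod ((4 - b * c).natAbs / 2))).prodMap
      (Int.castAddHom (ZMod 2))).comp Fhom with hχ
  have hχapp : ∀ Λ : Z,
      χ Λ = (((F Λ).1 : ZMod ((4 - b * c).natAbs / 2)), ((F Λ).2 : ZMod 2)) := fun Λ => rfl
  have hndvd : ∀ k : ℤ, ((k : ZMod ((4 - b * c).natAbs / 2)) = 0) ↔ d ∣ k := by
    intro k
    rw [ZMod.intCast_zmod_eq_zero_iff_dvd, hn, Int.natAbs_dvd]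
  have h2dvd : ∀ k : ℤ, ((k : ZMod 2) = 0) ↔ (2 : ℤ) ∣ k := by
    intro k
    rw [ZMod.intCast_zmod_eq_zero_iff_dvd]; norm_num
  have hsurj : Function.Surjective χ := by
    rintro ⟨α, β⟩
    obtain ⟨a, ha⟩ := ZMod.intCast_surjective (n := (4 - b * c).natAbs / 2) α
    obtain ⟨t, ht⟩ := ZMod.intCast_surjective (n := 2) β
    set v₁ : ℤ := t with hv₁
    set v₂ : ℤ := a + b' * t with hv₂
    set Λ : Fin 2 → ℝ := ![((2 * v₁ - c * v₂ : ℤ) : ℝ) / ((4 - b * c : ℤ) : ℝ),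
      ((-(b * v₁) + 2 * v₂ : ℤ) : ℝ) / ((4 - b * c : ℤ) : ℝ)] with hΛ
    have hΛ0 : Λ 0 = ((2 * v₁ - c * v₂ : ℤ) : ℝ) / ((4 - b * c : ℤ) : ℝ) := rfl
    have hΛ1 : Λ 1 = ((-(b * v₁) + 2 * v₂ : ℤ) : ℝ) / ((4 - b * c : ℤ) : ℝ) := rfl
    have hval0 : Matrix.vecMul Λ M 0 = ((v₁ : ℤ) : ℝ) := by
      rw [hvm, hM00, hM10, hΛ0, hΛ1]
      push_cast
      field_simp
      have h4 : (4 - (c : ℝ) * (b : ℝ)) ≠ 0 := by rwa [mul_comm (c : ℝ)]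
      field_simp
      ring
    have hval1 : Matrix.vecMul Λ M 1 = ((v₂ : ℤ) : ℝ) := by
      rw [hvm, hM01, hM11, hΛ0, hΛ1]
      push_cast
      field_simp
      have h4 : (4 - (c : ℝ) * (b : ℝ)) ≠ 0 := by rwa [mul_comm (c : ℝ)]
      field_simp
      ring
    have hΛZ : Λ ∈ Z := by
      rw [hmem]
      intro j
      fin_cases j
      · exact ⟨v₁, hval0⟩
      · exact ⟨v₂, hval1⟩
    refine ⟨⟨Λ, hΛZ⟩, ?_⟩
    have h0 : ⌊Matrix.vecMul Λ M 0⌋ = v₁ := by rw [hval0]; exact Int.floor_intCast _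
    have h1 : ⌊Matrix.vecMul Λ M 1⌋ = v₂ := by rw [hval1]; exact Int.floor_intCast _
    rw [hχapp ⟨Λ, hΛZ⟩]
    simp only [hF]
    rw [h0, h1]
    have hval : v₂ - b' * v₁ = a := by rw [hv₂, hv₁]; ring
    rw [hval, ha, Prod.mk.injEq]
    exact ⟨rfl, ht⟩
  have hker : χ.ker = (intLat (Fin 2)).addSubgroupOf Z := by
    ext Λ
    rw [AddMonoidHom.mem_ker, AddSubgroup.mem_addSubgroupOf]
    have hmemInt : (Λ : Fin 2 → ℝ) ∈ intLat (Fin 2) ↔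
        ∃ m₁ m₂ : ℤ, (Λ : Fin 2 → ℝ) 0 = m₁ ∧ (Λ : Fin 2 → ℝ) 1 = m₂ := by
      constructor
      · intro h
        obtain ⟨m₁, h₁⟩ := h 0
        obtain ⟨m₂, h₂⟩ := h 1
        exact ⟨m₁, m₂, h₁, h₂⟩
      · rintro ⟨m₁, m₂, h₁, h₂⟩ j
        fin_cases j
        · exact ⟨m₁, h₁⟩
        · exact ⟨m₂, h₂⟩
    set v₁ : ℤ := ⌊Matrix.vecMul (Λ : Fin 2 → ℝ) M 0⌋ with hv₁
    set v₂ : ℤ := ⌊Matrix.vecMul (Λ : Fin 2 → ℝ) M 1⌋ with hv₂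
    have e0 : (Λ : Fin 2 → ℝ) 0 * 2 + (Λ : Fin 2 → ℝ) 1 * (c : ℝ) = (v₁ : ℝ) := by
      rw [hv₁, hfl, hvm, hM00, hM10]
      try ring
    have e1 : (Λ : Fin 2 → ℝ) 0 * (b : ℝ) + (Λ : Fin 2 → ℝ) 1 * 2 = (v₂ : ℝ) := by
      rw [hv₂, hfl, hvm, hM01, hM11]
      try ring
    have hχval : χ Λ = 0 ↔ d ∣ (v₂ - b' * v₁) ∧ (2 : ℤ) ∣ v₁ := by
      rw [hχapp Λ]
      simp only [hF, Prod.mk_eq_zero]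
      rw [hndvd, h2dvd]
    rw [hχval, hmemInt]
    constructor
    · rintro ⟨⟨s, hs⟩, ⟨t, ht⟩⟩
      have hv2' : v₂ = b' * v₁ + d * s := by linarith [hs]
      have hm0 : ((t - c' * s : ℤ) : ℝ) * 2 + ((s : ℤ) : ℝ) * (c : ℝ) = (v₁ : ℝ) := by
        rw [ht, hc']; push_cast; ring
      have hm1 : ((t - c' * s : ℤ) : ℝ) * (b : ℝ) + ((s : ℤ) : ℝ) * 2 = (v₂ : ℝ) := by
        rw [hv2', ht, hb', hd]; push_cast; ring
      refine ⟨t - c' * s, s, ?_, ?_⟩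
      · have key : ((Λ : Fin 2 → ℝ) 0 - ((t - c' * s : ℤ) : ℝ)) * ((4 - b * c : ℤ) : ℝ) = 0 := by
          push_cast
          push_cast at hm0 hm1
          linear_combination 2 * e0 - 2 * hm0 - (c : ℝ) * e1 + (c : ℝ) * hm1
        have h := sub_eq_zero.mp ((mul_eq_zero.mp key).resolve_right hΔR)
        exact h
      · have key : ((Λ : Fin 2 → ℝ) 1 - ((s : ℤ) : ℝ)) * ((4 - b * c : ℤ) : ℝ) = 0 := by
          push_cast
          push_cast at hm0 hm1
          linear_combination 2 * e1 - 2 * hm1 - (b : ℝ) * e0 + (b : ℝ) * hm0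
        have h := sub_eq_zero.mp ((mul_eq_zero.mp key).resolve_right hΔR)
        exact h
    · rintro ⟨m₁, m₂, h₁, h₂⟩
      have hv1 : v₁ = 2 * m₁ + c * m₂ := by
        have h : (v₁ : ℝ) = ((2 * m₁ + c * m₂ : ℤ) : ℝ) := by
          rw [← e0, h₁, h₂]; push_cast; ring
        exact_mod_cast h
      have hv2 : v₂ = b * m₁ + 2 * m₂ := by
        have h : (v₂ : ℝ) = ((b * m₁ + 2 * m₂ : ℤ) : ℝ) := by
          rw [← e1, h₁, h₂]; push_cast; ring
        exact_mod_cast h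
      constructor
      · exact ⟨m₂, by rw [hv1, hv2, hb', hc', hd]; ring⟩
      · exact ⟨m₁ + c' * m₂, by rw [hv1, hc']; ring⟩
  exact ⟨(QuotientAddGroup.quotientAddEquivOfEq hker).symm.trans
    (QuotientAddGroup.quotientKerEquivOfSurjective χ hsurj)⟩
end

section
/- Let A be an n×n integer matrix and I ⊆ {1,…,n} with det A_I ≠ 0. Let L_I = {Λ ∈ ℤⁿ : (ΛÃ_I)A_I^{−1} ∈ ℤ^{|I|}}, let E_I(A) ⊆ ℤ^{|I|} be the subgroup generated by the rows of Ã_I = (a_{ij})_{i∈{1,…,n}, j∈I}, and E(A_I) ⊆ ℤ^{|I|} the subgroup generated by the rows of A_I. Then ℤⁿ/L_I ≅ E_I(A)/E(A_I). -/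
open Matrix


/-- The subgroup of rational vectors with all coordinates integers. -/
def intLatQ (ι : Type*) : AddSubgroup (ι → ℚ) where
  carrier := {v | ∀ j, ∃ m : ℤ, v j = m}
  zero_mem' := fun j => ⟨0, by simp⟩
  add_mem' := by
    rintro x y hx hy j
    obtain ⟨a, ha⟩ := hx j; obtain ⟨b, hb⟩ := hy j
    exact ⟨a + b, by push_cast; rw [Pi.add_apply, ha, hb]⟩
  neg_mem' := by
    rintro x hx j
    obtain ⟨a, ha⟩ := hx j
    exact ⟨-a, by push_cast; rw [Pi.neg_apply, ha]⟩

/-- Closure of the rows of a matrix is the range of `vecMul`. -/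
lemma closure_rows_eq_range_vecMul {m k : Type*} [Fintype m] [Fintype k] [DecidableEq m]
    (M : Matrix m k ℤ) :
    AddSubgroup.closure (Set.range M) =
      (LinearMap.range M.vecMulLinear).toAddSubgroup := by
  rw [range_vecMulLinear, Submodule.span_int_eq_addSubgroupClosure]
  rfl

/-- With `L_I = {Λ ∈ ℤⁿ : (Λ Ã_I) A_I⁻¹ ∈ ℤ^{|I|}}`, `E_I(A)` the subgroup of
`ℤ^{|I|}` generated by the rows of `Ã_I`, and `E(A_I)` the subgroup generated by the rows of
`A_I`, we have `ℤⁿ/L_I ≅ E_I(A)/E(A_I)` (assuming `det A_I ≠ 0`). -/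
theorem stmt12 (n : ℕ) (A : Matrix (Fin n) (Fin n) ℤ) (I : Finset (Fin n))
    (AIQ : Matrix ↥I ↥I ℚ) (hAIQ : AIQ = Matrix.of fun i j => (A i.val j.val : ℚ))
    (AtIQ : Matrix (Fin n) ↥I ℚ) (hAtIQ : AtIQ = Matrix.of fun i j => (A i j.val : ℚ))
    (hdet : AIQ.det ≠ 0)
    (LI : AddSubgroup (Fin n → ℤ))
    (hLI : LI = AddSubgroup.comap
      (((AtIQ * AIQ⁻¹).vecMulLinear).toAddMonoidHom.comp
        ((Int.castAddHom ℚ).compLeft (Fin n))) (intLatQ ↥I))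
    (EI : AddSubgroup (↥I → ℤ))
    (hEI : EI = AddSubgroup.closure (Set.range fun i : Fin n => fun j : ↥I => A i j.val))
    (EAI : AddSubgroup (↥I → ℤ))
    (hEAI : EAI = AddSubgroup.closure (Set.range fun i : ↥I => fun j : ↥I => A i.val j.val)) :
    Nonempty (((Fin n → ℤ) ⧸ LI) ≃+ (↥EI ⧸ EAI.addSubgroupOf EI)) := by
  classical
  set B : Matrix (Fin n) ↥I ℤ := Matrix.of fun i j => A i j.val with hB
  set C : Matrix ↥I ↥I ℤ := Matrix.of fun i j => A i.val j.val with hC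
  have hEI' : ∀ x : ↥I → ℤ, x ∈ EI ↔ ∃ v : Fin n → ℤ, v ᵥ* B = x := by
    intro x
    rw [hEI]
    have : (Set.range fun i : Fin n => fun j : ↥I => A i j.val) = Set.range B := rfl
    rw [this, closure_rows_eq_range_vecMul]
    simp [LinearMap.mem_range, Matrix.vecMulLinear_apply]
  have hEAI' : ∀ x : ↥I → ℤ, x ∈ EAI ↔ ∃ v : ↥I → ℤ, v ᵥ* C = x := by
    intro x
    rw [hEAI]
    have : (Set.range fun i : ↥I => fun j : ↥I => A i.val j.val) = Set.range C := rfl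
    rw [this, closure_rows_eq_range_vecMul]
    simp [LinearMap.mem_range, Matrix.vecMulLinear_apply]
  -- cast facts
  have hBcast : B.map (Int.cast : ℤ → ℚ) = AtIQ := by
    rw [hAtIQ]; ext i j; simp [hB]
  have hCcast : C.map (Int.cast : ℤ → ℚ) = AIQ := by
    rw [hAIQ]; ext i j; simp [hC]
  have castB : ∀ (v : Fin n → ℤ) (j : ↥I),
      ((v ᵥ* B) j : ℚ) = ((fun i => (v i : ℚ)) ᵥ* AtIQ) j := by
    intro v j
    rw [← hBcast]
    exact RingHom.map_vecMul (Int.castRingHom ℚ) B v j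
  have castC : ∀ (v : ↥I → ℤ) (j : ↥I),
      ((v ᵥ* C) j : ℚ) = ((fun i => (v i : ℚ)) ᵥ* AIQ) j := by
    intro v j
    rw [← hCcast]
    exact RingHom.map_vecMul (Int.castRingHom ℚ) C v j
  have hu : IsUnit AIQ.det := isUnit_iff_ne_zero.2 hdet
  have hinv1 : AIQ⁻¹ * AIQ = 1 := Matrix.nonsing_inv_mul _ hu
  have hinv2 : AIQ * AIQ⁻¹ = 1 := Matrix.mul_nonsing_inv _ hu
  -- membership in LI, unfolded
  have hLImem : ∀ Λ : Fin n → ℤ, Λ ∈ LI ↔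
      ∀ j : ↥I, ∃ m : ℤ, (((fun i => (Λ i : ℚ)) ᵥ* AtIQ) ᵥ* AIQ⁻¹) j = m := by
    intro Λ
    rw [hLI]
    simp only [AddSubgroup.mem_comap, AddMonoidHom.coe_comp, Function.comp_apply,
      LinearMap.toAddMonoidHom_coe, Matrix.vecMulLinear_apply]
    constructor
    · intro h j
      obtain ⟨m, hm⟩ := h j
      refine ⟨m, ?_⟩
      rw [← hm, Matrix.vecMul_vecMul]
      rfl
    · intro h j
      obtain ⟨m, hm⟩ := h j
      refine ⟨m, ?_⟩
      rw [← hm]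
      show ((fun i => (Λ i : ℚ)) ᵥ* (AtIQ * AIQ⁻¹)) j = _
      rw [← Matrix.vecMul_vecMul]
  -- the key equivalence
  have key : ∀ Λ : Fin n → ℤ, (Λ ᵥ* B) ∈ EAI ↔ Λ ∈ LI := by
    intro Λ
    rw [hEAI', hLImem]
    constructor
    · rintro ⟨μ, hμ⟩ j
      refine ⟨μ j, ?_⟩
      have hw : (fun i => (Λ i : ℚ)) ᵥ* AtIQ = (fun i => (μ i : ℚ)) ᵥ* AIQ := by
        funext j'
        rw [← castB Λ j', ← hμ, castC μ j']
      rw [hw, Matrix.vecMul_vecMul, hinv2, Matrix.vecMul_one]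
    · intro h
      choose μ hμ using h
      refine ⟨μ, ?_⟩
      have hμ' : (fun i => (μ i : ℚ)) = ((fun i => (Λ i : ℚ)) ᵥ* AtIQ) ᵥ* AIQ⁻¹ := by
        funext j; rw [hμ j]
      have : (fun i => (μ i : ℚ)) ᵥ* AIQ = (fun i => (Λ i : ℚ)) ᵥ* AtIQ := by
        rw [hμ', Matrix.vecMul_vecMul, Matrix.vecMul_vecMul, hinv1, Matrix.mul_one]
      funext j
      have hj : ((μ ᵥ* C) j : ℚ) = ((Λ ᵥ* B) j : ℚ) := by
        rw [castC μ j, castB Λ j, this]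
      exact_mod_cast hj
  -- the homomorphism
  have memEI : ∀ Λ : Fin n → ℤ, (Λ ᵥ* B) ∈ EI := fun Λ => (hEI' _).2 ⟨Λ, rfl⟩
  let f : (Fin n → ℤ) →+ ↥EI :=
    { toFun := fun Λ => ⟨Λ ᵥ* B, memEI Λ⟩
      map_zero' := by ext j; simp [Matrix.zero_vecMul]
      map_add' := by intro x y; ext j; simp [Matrix.add_vecMul] }
  let g : (Fin n → ℤ) →+ (↥EI ⧸ EAI.addSubgroupOf EI) :=
    (QuotientAddGroup.mk' (EAI.addSubgroupOf EI)).comp f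
  have hsurj : Function.Surjective g := by
    intro q
    induction q using QuotientAddGroup.induction_on with
    | H x =>
      obtain ⟨x, hx⟩ := x
      obtain ⟨v, hv⟩ := (hEI' x).1 hx
      refine ⟨v, ?_⟩
      have hfx : f v = ⟨x, hx⟩ := Subtype.ext hv
      show QuotientAddGroup.mk' (EAI.addSubgroupOf EI) (f v) = _
      rw [hfx]
      rfl
  have hker : LI = g.ker := by
    ext Λ
    rw [AddMonoidHom.mem_ker]
    show Λ ∈ LI ↔ QuotientAddGroup.mk' (EAI.addSubgroupOf EI) (f Λ) = 0
    rw [QuotientAddGroup.mk'_apply, QuotientAddGroup.eq_zero_iff,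
      AddSubgroup.mem_addSubgroupOf]
    exact (key Λ).symm
  rw [hker]
  exact ⟨QuotientAddGroup.quotientKerEquivOfSurjective g hsurj⟩
end
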